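/- ∫₀^{π/2} (1 − 2t/(π/2 + t)) · sin(2t) dt ∈ (0.36, 0.37). -/

import Mathlib

/-!
Since `1 - 2t/(π/2 + t) = -1 + π/(π/2 + t)` and `sin 2t` is symmetric under `t ↦ π/2 - t`,
averaging the integrand with its reflection turns the weight into `-1 + (4/3)/(1 - y)` with
`y = ((4t - π)/(3π))² ∈ [0, 1/9]`. The bounds `1 + y ≤ 1/(1 - y) ≤ 1 + 9y/8` sandwich the
integral between integrals of quadratics against `sin 2t`, which are elementary:
`13/27 - 32/(27π²) ≤ ∫ ≤ 1/2 - 4/(3π²)`, and `3.14 < π < 3.15` finishes.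
-/

open Real intervalIntegral MeasureTheory Set

theorem intervalIntegral.integral_eq_integral_average_reflect {f : ℝ → ℝ} {a b : ℝ}
    (hf : IntervalIntegrable f volume a b) :
    ∫ x in a..b, f x = ∫ x in a..b, (f x + f (a + b - x)) / 2 := by
  have hreflect : ∫ x in a..b, f (a + b - x) = ∫ x in a..b, f x := by
    simp [integral_comp_sub_left]
  rw [integral_div, integral_add hf (by simpa using hf.symm.comp_sub_left (a + b)), hreflect]
  ring

theorem one_add_le_inv_one_sub {y : ℝ} (hy₀ : 0 ≤ y) (hy₁ : y < 1) : 1 + y ≤ (1 - y)⁻¹ := by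
  rw [← one_div, le_div_iff₀ (by linarith)]
  nlinarith

theorem inv_one_sub_le_one_add_div {y r : ℝ} (hy₀ : 0 ≤ y) (hyr : y ≤ r) (hr : r < 1) :
    (1 - y)⁻¹ ≤ 1 + y / (1 - r) := by
  have hy : (1 - y)⁻¹ = 1 + y / (1 - y) := by
    field_simp [(by linarith : 1 - y ≠ 0)]
    ring
  rw [hy]
  gcongr

theorem integral_quadratic_mul_sin_two_mul (α β : ℝ) :
    ∫ t in (0 : ℝ)..π / 2, (α + β * (4 * t - π) ^ 2) * sin (2 * t) = α + β * (π ^ 2 - 8) := by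
  have hderiv : ∀ t : ℝ, HasDerivAt
      (fun t => -(α + β * (4 * t - π) ^ 2) * cos (2 * t) / 2
        + 2 * β * (4 * t - π) * sin (2 * t) + 4 * β * cos (2 * t))
      ((α + β * (4 * t - π) ^ 2) * sin (2 * t)) t := by
    intro t
    have h2 : HasDerivAt (fun t : ℝ => 2 * t) 2 t := by
      simpa using (hasDerivAt_id t).const_mul 2
    have hp : HasDerivAt (fun t : ℝ => 4 * t - π) 4 t := by
      simpa using ((hasDerivAt_id t).const_mul 4).sub_const π
    have H := (((((hp.pow 2).const_mul β).const_add α).neg.mul h2.cos).div_const 2).add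
        ((hp.const_mul (2 * β)).mul h2.sin) |>.add (h2.cos.const_mul (4 * β))
    refine H.congr_deriv ?_
    simp only [Pi.neg_apply, Pi.pow_apply]
    ring
  rw [integral_eq_sub_of_hasDerivAt (fun t _ => hderiv t)
    (Continuous.intervalIntegrable (by fun_prop) _ _)]
  have : 2 * (π / 2) = π := by ring
  simp only [this, cos_pi, sin_pi, mul_zero, cos_zero, sin_zero]
  ring

noncomputable def secondMomentIntegrand (t : ℝ) : ℝ := (1 - 2 * t / (π / 2 + t)) * sin (2 * t)

theorem intervalIntegrable_secondMomentIntegrand :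
    IntervalIntegrable secondMomentIntegrand volume 0 (π / 2) := by
  refine ContinuousOn.intervalIntegrable fun t ht => ?_
  rw [uIcc_of_le (by positivity)] at ht
  have : π / 2 + t ≠ 0 := by linarith [ht.1, pi_pos]
  unfold secondMomentIntegrand
  fun_prop (disch := exact this)

theorem secondMomentIntegrand_average_eq {t : ℝ} (ht : t ∈ Icc 0 (π / 2)) :
    (secondMomentIntegrand t + secondMomentIntegrand (π / 2 - t)) / 2
      = (-1 + 4 / 3 * (1 - ((4 * t - π) / (3 * π)) ^ 2)⁻¹) * sin (2 * t) := by
  obtain ⟨ht₀, ht₁⟩ := ht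
  have hπ := pi_pos
  have h₁ : π + 2 * t ≠ 0 := by linarith
  have h₂ : π - t ≠ 0 := by linarith
  have hy : 1 - ((4 * t - π) / (3 * π)) ^ 2 = 8 * (π - t) * (π + 2 * t) / (9 * π ^ 2) := by
    field_simp
    ring
  have hsin : sin (2 * (π / 2 - t)) = sin (2 * t) := by
    rw [mul_sub, mul_div_cancel₀ _ two_ne_zero, sin_pi_sub]
  unfold secondMomentIntegrand
  rw [hsin, hy, show π / 2 + (π / 2 - t) = π - t by ring]
  field_simp
  ring

theorem secondMomentIntegrand_average_mem_Icc {t : ℝ} (ht : t ∈ Icc 0 (π / 2)) :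
    (secondMomentIntegrand t + secondMomentIntegrand (π / 2 - t)) / 2 ∈
      Icc ((1 / 3 + 4 / (27 * π ^ 2) * (4 * t - π) ^ 2) * sin (2 * t))
        ((1 / 3 + 1 / (6 * π ^ 2) * (4 * t - π) ^ 2) * sin (2 * t)) := by
  have hπ := pi_pos
  have hsin : 0 ≤ sin (2 * t) :=
    sin_nonneg_of_nonneg_of_le_pi (by linarith [ht.1]) (by linarith [ht.2])
  set y := ((4 * t - π) / (3 * π)) ^ 2 with hy
  have hy₀ : 0 ≤ y := by positivity
  have hy₁ : y ≤ 1 / 9 := by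
    rw [hy, div_pow, div_le_iff₀ (by positivity)]
    nlinarith [ht.1, ht.2]
  have hlower : 1 / 3 + 4 / (27 * π ^ 2) * (4 * t - π) ^ 2 = -1 + 4 / 3 * (1 + y) := by
    rw [hy]; field_simp; ring
  have hupper :
      1 / 3 + 1 / (6 * π ^ 2) * (4 * t - π) ^ 2 = -1 + 4 / 3 * (1 + y / (1 - 1 / 9)) := by
    rw [hy]; field_simp; ring
  rw [secondMomentIntegrand_average_eq ht, hlower, hupper]
  constructor
  · gcongr
    exact one_add_le_inv_one_sub hy₀ (by linarith)
  · gcongr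
    exact inv_one_sub_le_one_add_div hy₀ hy₁ (by norm_num)

theorem stmt_18 :
    (∫ t in (0:ℝ)..(Real.pi/2), (1 - 2*t/(Real.pi/2 + t)) * Real.sin (2*t))
      ∈ Set.Ioo (0.36:ℝ) 0.37 := by
  have hf := intervalIntegrable_secondMomentIntegrand
  have havg : IntervalIntegrable
      (fun t => (secondMomentIntegrand t + secondMomentIntegrand (π / 2 - t)) / 2)
      volume 0 (π / 2) :=
    (hf.add (by simpa using hf.symm.comp_sub_left (π / 2))).div_const 2
  have hlower := integral_mono_on (by positivity) (Continuous.intervalIntegrable (by fun_prop) _ _)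
    havg fun t ht => (secondMomentIntegrand_average_mem_Icc ht).1
  have hupper := integral_mono_on (by positivity) havg
    (Continuous.intervalIntegrable (by fun_prop) _ _)
    fun t ht => (secondMomentIntegrand_average_mem_Icc ht).2
  have hsym := integral_eq_integral_average_reflect hf
  rw [zero_add] at hsym
  rw [integral_quadratic_mul_sin_two_mul, ← hsym] at hlower hupper
  change ∫ t in 0..π / 2, secondMomentIntegrand t ∈ _
  have hπ₀ := pi_gt_d2
  have hπ₁ := pi_lt_d2
  constructor
  · refine lt_of_lt_of_le ?_ hlower
    rw [div_mul_eq_mul_div, ← sub_lt_iff_lt_add', lt_div_iff₀ (by positivity)]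
    nlinarith
  · refine lt_of_le_of_lt hupper ?_
    rw [div_mul_eq_mul_div, ← lt_sub_iff_add_lt', div_lt_iff₀ (by positivity)]
    nlinarith
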